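/- arXiv:1301.1751 — 2 statements merged into one kernel-verified Lean document; each statement's English description precedes it below -/
import Mathlib

section
/- Let n ≥ 1 and m ≥ 1, let χ : Fin (3n) → Fin 3 be a map each of whose three fibers has exactly n elements, and let e : Fin m → Finset (Fin (3n)) be an injective family such that each e(j) has exactly 3 elements, one in each fiber of χ. Define the table T : Fin (3n) → Fin m → ℕ by T(i)(j) = 0 if i ∈ e(j) and T(i)(j) = i + 1 otherwise, with sensitive-attribute map SA = χ. Let t be a real number with 0 ≤ t < 1/3. Then the following are equivalent: (1) there exists M ⊆ Fin m with |M| = n such that the union of e(j) over j ∈ M equals all of Fin (3n); (2) there exists a partition P of the rows such that every block B of P satisfies EMD(P(B), P(Fin (3n))) ≤ t with respect to the equal-distance metric on Fin 3 and cost(P) ≤ 3n·(m − 1). -/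
/-!
A block meeting the bound `t < 1/3` must contain rows of all three sensitive values (a missing
value `a` costs transport of mass `1/3` into `a`), so it has at least three rows. In the table a
column `j` is constant on a block of at least two rows only if the block lies inside `e j`, and
a block of at least three rows lies inside at most one triple `e j`, and then equals it. Hence a
block `B` costs at least `|B| (m - 1)`, with equality exactly for the triples; since the block
sizes add up to `3n`, cost `≤ 3n (m - 1)` forces every block to be a triple, i.e. an exact cover.
Conversely the `n` triples of an exact cover are pairwise disjoint (their sizes add up to `3n`),
have the uniform distribution of `χ`, and cost `3 (m - 1)` each.
-/

open Finset

attribute [local instance] Classical.propDecidable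

noncomputable def EMD {s : ℕ} (d : Fin s → Fin s → ℝ) (X Y : Fin s → ℝ) : ℝ :=
  sInf { c : ℝ | ∃ f : Fin s → Fin s → ℝ,
    (∀ i j, 0 ≤ f i j) ∧ (∀ i, ∑ j, f i j = X i) ∧ (∀ j, ∑ i, f i j = Y j) ∧
    c = ∑ i, ∑ j, d i j * f i j }

def eqDist (s : ℕ) : Fin s → Fin s → ℝ := fun i j => if i = j then 0 else 1

/-- The SA distribution of a set `B` of rows, given a sensitive-attribute map `SA`. -/
noncomputable def SAdist {n s : ℕ} (SA : Fin n → Fin s) (B : Finset (Fin n)) :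
    Fin s → ℝ :=
  fun i => ((B.filter (fun r => SA r = i)).card : ℝ) / B.card

/-- The suppression cost of a set `B` of rows of table `T`. -/
noncomputable def suppCost {n : ℕ} {ι α : Type*} [Fintype ι]
    (T : Fin n → ι → α) (B : Finset (Fin n)) : ℕ :=
  B.card *
    (Finset.univ.filter (fun j : ι => ¬ ∀ i ∈ B, ∀ i' ∈ B, T i j = T i' j)).card

/-- `P` is a partition of the rows `Fin n`. -/
def IsRowPartition {n : ℕ} (P : Finset (Finset (Fin n))) : Prop :=
  (∀ B ∈ P, B.Nonempty) ∧
  (∀ B ∈ P, ∀ B' ∈ P, B ≠ B' → Disjoint B B') ∧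
  (∀ i : Fin n, ∃ B ∈ P, i ∈ B)

/-- The cost of a partition: the sum of the suppression costs of its blocks. -/
noncomputable def partCost {n : ℕ} {ι α : Type*} [Fintype ι]
    (T : Fin n → ι → α) (P : Finset (Finset (Fin n))) : ℕ :=
  ∑ B ∈ P, suppCost T B

def IsProbVec {s : ℕ} (X : Fin s → ℝ) : Prop :=
  (∀ i, 0 ≤ X i) ∧ ∑ i, X i = 1

lemma eqDist_nonneg (s : ℕ) (i j : Fin s) : 0 ≤ eqDist s i j := by
  unfold eqDist; split_ifs <;> norm_num

lemma EMD_eqDist_self_nonpos {s : ℕ} {X : Fin s → ℝ} (hX : ∀ i, 0 ≤ X i) :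
    EMD (eqDist s) X X ≤ 0 := by
  apply csInf_le
  · refine ⟨0, ?_⟩
    rintro _ ⟨f, hf, -, -, rfl⟩
    exact sum_nonneg fun i _ => sum_nonneg fun j _ => mul_nonneg (eqDist_nonneg s i j) (hf i j)
  · refine ⟨fun i j => if i = j then X i else 0, fun i j => ?_, fun i => by simp,
      fun j => by simp, ?_⟩
    · dsimp only
      split_ifs
      exacts [hX i, le_rfl]
    · refine (sum_eq_zero fun i _ => sum_eq_zero fun j _ => ?_).symm
      by_cases h : i = j <;> simp [eqDist, h]

lemma le_EMD_eqDist_of_eq_zero {s : ℕ} {X Y : Fin s → ℝ} (hX : IsProbVec X) (hY : IsProbVec Y)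
    {a : Fin s} (ha : X a = 0) : Y a ≤ EMD (eqDist s) X Y := by
  apply le_csInf
  · exact ⟨_, fun i j => X i * Y j, fun i j => mul_nonneg (hX.1 i) (hY.1 j),
      fun i => by rw [← mul_sum, hY.2, mul_one], fun j => by rw [← sum_mul, hX.2, one_mul], rfl⟩
  · rintro _ ⟨f, hf, hrow, hcol, rfl⟩
    have hfaa : f a a = 0 :=
      le_antisymm (ha ▸ hrow a ▸ single_le_sum (fun j _ => hf a j) (mem_univ a)) (hf a a)
    calc Y a = ∑ i, eqDist s i a * f i a := by
          rw [← hcol a]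
          refine sum_congr rfl fun i _ => ?_
          by_cases h : i = a <;> simp [eqDist, h, hfaa]
      _ ≤ ∑ i, ∑ j, eqDist s i j * f i j :=
          sum_le_sum fun i _ => single_le_sum (fun j _ => mul_nonneg (eqDist_nonneg s i j)
            (hf i j)) (mem_univ a)

section SAdist

variable {N s : ℕ} (SA : Fin N → Fin s) {B : Finset (Fin N)}

lemma SAdist_isProbVec (hB : B.Nonempty) : IsProbVec (SAdist SA B) := by
  refine ⟨fun i => by unfold SAdist; positivity, ?_⟩
  unfold SAdist
  rw [← sum_div, ← Nat.cast_sum, ← card_eq_sum_card_fiberwise fun x _ => mem_univ (SA x),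
    div_self (by exact_mod_cast hB.card_pos.ne')]

lemma card_eq_mul_of_card_filter_eq {k : ℕ} (h : ∀ a, (B.filter (SA · = a)).card = k) :
    B.card = s * k := by
  rw [card_eq_sum_card_fiberwise fun x _ => mem_univ (SA x)]
  simp [h]

lemma SAdist_eq_of_card_filter_eq {k : ℕ} (hk : k ≠ 0)
    (h : ∀ a, (B.filter (SA · = a)).card = k) (a : Fin s) : SAdist SA B a = 1 / s := by
  have hk' : (k : ℝ) ≠ 0 := by exact_mod_cast hk
  rw [SAdist, h, card_eq_mul_of_card_filter_eq SA h]
  push_cast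
  field_simp

lemma card_le_of_forall_filter_nonempty (h : ∀ a, (B.filter (SA · = a)).Nonempty) :
    s ≤ B.card := by
  calc s = ∑ _a : Fin s, 1 := by simp
    _ ≤ ∑ a, (B.filter (SA · = a)).card := sum_le_sum fun a _ => (h a).card_pos
    _ = B.card := (card_eq_sum_card_fiberwise fun x _ => mem_univ (SA x)).symm

lemma forall_filter_nonempty_of_EMD_lt {Y : Fin s → ℝ} (hY : IsProbVec Y) (hB : B.Nonempty)
    (h : ∀ a, EMD (eqDist s) (SAdist SA B) Y < Y a) (a : Fin s) :
    (B.filter (SA · = a)).Nonempty := by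
  by_contra hempty
  have h0 : SAdist SA B a = 0 := by
    simp [SAdist, not_nonempty_iff_eq_empty.mp hempty]
  exact (h a).not_ge (le_EMD_eqDist_of_eq_zero (SAdist_isProbVec SA hB) hY h0)

end SAdist

lemma Finset.pairwiseDisjoint_of_sum_card_le_card_biUnion {ι α : Type*} [DecidableEq α]
    {M : Finset ι} {e : ι → Finset α} (h : ∑ j ∈ M, (e j).card ≤ (M.biUnion e).card) :
    (M : Set ι).PairwiseDisjoint e := by
  intro j hj j' hj' hne
  rw [Function.onFun, disjoint_iff_inter_eq_empty, ← card_eq_zero]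
  set A := (M.erase j).biUnion e
  have hunion : A ∪ e j = M.biUnion e := by
    rw [union_comm, ← biUnion_insert, insert_erase hj]
  have hA : A.card ≤ ∑ i ∈ M.erase j, (e i).card := card_biUnion_le
  have hinter : (e j ∩ e j').card ≤ (A ∩ e j).card := by
    rw [inter_comm]
    exact card_le_card <| inter_subset_inter_right <|
      subset_biUnion_of_mem e (mem_erase.mpr ⟨hne.symm, hj'⟩)
  have hsum := sum_erase_add M (fun i => (e i).card) hj
  have hcard := card_union_add_card_inter A (e j)
  rw [hunion] at hcard
  omega

lemma isRowPartition_image {N : ℕ} {ι : Type*} [DecidableEq ι] {M : Finset ι}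
    {e : ι → Finset (Fin N)} (hne : ∀ j ∈ M, (e j).Nonempty)
    (hdisj : (M : Set ι).PairwiseDisjoint e) (hcover : M.biUnion e = univ) :
    IsRowPartition (M.image e) := by
  refine ⟨by simpa using hne, ?_, fun i => ?_⟩
  · simp only [mem_image]
    rintro _ ⟨j, hj, rfl⟩ _ ⟨j', hj', rfl⟩ hne
    exact hdisj hj hj' fun h => hne (congrArg e h)
  · obtain ⟨j, hj, hi⟩ := mem_biUnion.mp (hcover ▸ mem_univ i)
    exact ⟨e j, mem_image_of_mem e hj, hi⟩

lemma IsRowPartition.sum_card {N : ℕ} {P : Finset (Finset (Fin N))} (hP : IsRowPartition P) :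
    ∑ B ∈ P, B.card = N := by
  have hcover : P.biUnion id = univ :=
    eq_univ_of_forall fun i => mem_biUnion.mpr (hP.2.2 i)
  simpa [hcover] using (card_biUnion (t := id) fun B hB B' hB' => hP.2.1 B hB B' hB').symm

lemma suppCost_eq_card_mul_sub {n : ℕ} {ι α : Type*} [Fintype ι] (T : Fin n → ι → α)
    (B : Finset (Fin n)) :
    suppCost T B =
      B.card *
        (Fintype.card ι - (univ.filter fun j => ∀ i ∈ B, ∀ i' ∈ B, T i j = T i' j).card) := by
  rw [suppCost, filter_not, card_sdiff_of_subset (filter_subset _ _), card_univ]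

def coverTable {N m : ℕ} (e : Fin m → Finset (Fin N)) : Fin N → Fin m → ℕ :=
  fun i j => if i ∈ e j then 0 else (i : ℕ) + 1

section coverTable

variable {N m : ℕ} {e : Fin m → Finset (Fin N)} {B : Finset (Fin N)}

lemma coverTable_column_const_iff (hB : 1 < B.card) (j : Fin m) :
    (∀ i ∈ B, ∀ i' ∈ B, coverTable e i j = coverTable e i' j) ↔ B ⊆ e j := by
  refine ⟨fun h i hi => ?_, fun h i hi i' hi' => by simp [coverTable, h hi, h hi']⟩
  by_contra hout
  obtain ⟨i', hi', hne⟩ := exists_mem_ne hB i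
  have := h i hi i' hi'
  by_cases hin : i' ∈ e j <;> simp only [coverTable, hout, hin, if_false, if_true] at this
  · omega
  · exact hne (Fin.ext (by omega)).symm

lemma suppCost_coverTable (hB : 1 < B.card) :
    suppCost (coverTable e) B = B.card * (m - (univ.filter fun j => B ⊆ e j).card) := by
  rw [suppCost_eq_card_mul_sub, Fintype.card_fin]
  simp only [coverTable_column_const_iff hB]

lemma suppCost_coverTable_self (he3 : ∀ j, (e j).card = 3)
    (hinj : Function.Injective e) (j : Fin m) :
    suppCost (coverTable e) (e j) = 3 * (m - 1) := by
  have hfilter : (univ.filter fun j' => e j ⊆ e j') = {j} := by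
    ext j'
    simp only [mem_filter, mem_univ, true_and, mem_singleton]
    exact ⟨fun h => hinj (eq_of_subset_of_card_le h (by rw [he3, he3])).symm,
      fun h => h ▸ Subset.rfl⟩
  rw [suppCost_coverTable (by rw [he3]; norm_num), hfilter, he3, card_singleton]

lemma card_mul_pred_le_suppCost_coverTable (he3 : ∀ j, (e j).card = 3)
    (hinj : Function.Injective e) (hB : 3 ≤ B.card) :
    B.card * (m - 1) ≤ suppCost (coverTable e) B := by
  rw [suppCost_coverTable (by omega)]
  refine Nat.mul_le_mul_left _ (Nat.sub_le_sub_left (card_le_one.mpr fun j hj j' hj' => ?_) m)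
  simp only [mem_filter, mem_univ, true_and] at hj hj'
  exact hinj ((eq_of_subset_of_card_le hj (he3 j ▸ hB)).symm.trans
    (eq_of_subset_of_card_le hj' (he3 j' ▸ hB)))

lemma card_mul_pred_lt_suppCost_coverTable (he3 : ∀ j, (e j).card = 3)
    (hm : 1 ≤ m) (hB : 3 ≤ B.card) (hBe : B ∉ Set.range e) :
    B.card * (m - 1) < suppCost (coverTable e) B := by
  have hfilter : (univ.filter fun j => B ⊆ e j) = ∅ :=
    filter_false_of_mem fun j _ h => hBe ⟨j, (eq_of_subset_of_card_le h (he3 j ▸ hB)).symm⟩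
  rw [suppCost_coverTable (by omega), hfilter, card_empty, Nat.sub_zero]
  exact Nat.mul_lt_mul_of_pos_left (by omega) (by omega)

lemma partCost_image_coverTable (he3 : ∀ j, (e j).card = 3)
    (hinj : Function.Injective e) (M : Finset (Fin m)) :
    partCost (coverTable e) (M.image e) = M.card * (3 * (m - 1)) := by
  rw [partCost, sum_image fun j _ j' _ h => hinj h]
  simp [suppCost_coverTable_self he3 hinj]

lemma mem_range_of_partCost_coverTable_le (he3 : ∀ j, (e j).card = 3)
    (hm : 1 ≤ m) (hinj : Function.Injective e)
    {P : Finset (Finset (Fin N))} (hP : IsRowPartition P) (h3 : ∀ B ∈ P, 3 ≤ B.card)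
    (hcost : partCost (coverTable e) P ≤ N * (m - 1)) : ∀ B ∈ P, B ∈ Set.range e := by
  by_contra! ⟨B, hB, hBe⟩
  have hlt : ∑ B ∈ P, B.card * (m - 1) < partCost (coverTable e) P :=
    sum_lt_sum (fun B hB => card_mul_pred_le_suppCost_coverTable he3 hinj (h3 B hB))
      ⟨B, hB, card_mul_pred_lt_suppCost_coverTable he3 hm (h3 B hB) hBe⟩
  rw [← sum_mul, hP.sum_card] at hlt
  omega

lemma exists_biUnion_eq_univ_of_isRowPartition (he3 : ∀ j, (e j).card = 3)
    (hinj : Function.Injective e)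
    {P : Finset (Finset (Fin N))} (hP : IsRowPartition P) (hPe : ∀ B ∈ P, B ∈ Set.range e) :
    ∃ M : Finset (Fin m), 3 * M.card = N ∧ M.biUnion e = univ := by
  set M := univ.filter fun j => e j ∈ P
  have himage : M.image e = P := by
    ext B
    simp only [M, mem_image, mem_filter, mem_univ, true_and]
    refine ⟨fun ⟨j, hj, hjB⟩ => hjB ▸ hj, fun hB => ?_⟩
    obtain ⟨j, rfl⟩ := hPe B hB
    exact ⟨j, hB, rfl⟩
  refine ⟨M, ?_, eq_univ_of_forall fun i => ?_⟩
  · rw [← hP.sum_card, ← himage, sum_image fun j _ j' _ h => hinj h]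
    simp [he3, mul_comm]
  · obtain ⟨B, hB, hiB⟩ := hP.2.2 i
    obtain ⟨j, rfl⟩ := hPe B hB
    exact mem_biUnion.mpr ⟨j, by simpa [M] using hB, hiB⟩

end coverTable

theorem stmt11 (n m : ℕ) (hn : 1 ≤ n) (hm : 1 ≤ m)
    (χ : Fin (3 * n) → Fin 3)
    (hχ : ∀ v : Fin 3, (Finset.univ.filter (fun i => χ i = v)).card = n)
    (e : Fin m → Finset (Fin (3 * n))) (hinj : Function.Injective e)
    (he3 : ∀ j, (e j).card = 3)
    (hfib : ∀ j, ∀ v : Fin 3, ((e j).filter (fun i => χ i = v)).card = 1)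
    (t : ℝ) (ht0 : 0 ≤ t) (ht1 : t < 1 / 3) :
    (∃ M : Finset (Fin m), M.card = n ∧ M.biUnion e = Finset.univ) ↔
    (∃ P : Finset (Finset (Fin (3 * n))), IsRowPartition P ∧
      (∀ B ∈ P, EMD (eqDist 3) (SAdist χ B) (SAdist χ Finset.univ) ≤ t) ∧
      partCost (fun i j => if i ∈ e j then 0 else (i : ℕ) + 1) P ≤ 3 * n * (m - 1)) := by
  have huniv : SAdist χ univ = fun _ => 1 / 3 := by
    ext a
    simpa using SAdist_eq_of_card_filter_eq χ (by omega) hχ a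
  have hU : IsProbVec (SAdist χ univ) := SAdist_isProbVec χ ⟨⟨0, by omega⟩, mem_univ _⟩
  constructor
  · rintro ⟨M, hMcard, hcover⟩
    have hdisj : (M : Set (Fin m)).PairwiseDisjoint e :=
      pairwiseDisjoint_of_sum_card_le_card_biUnion (by simp [he3, hMcard, hcover, mul_comm])
    refine ⟨M.image e, isRowPartition_image (fun j _ => card_pos.mp (by simp [he3])) hdisj hcover,
      forall_mem_image.mpr fun j _ => ?_, ?_⟩
    · have hej : SAdist χ (e j) = SAdist χ univ := by
        ext a
        rw [SAdist_eq_of_card_filter_eq χ one_ne_zero (hfib j), huniv]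
        norm_num
      rw [hej]
      exact (EMD_eqDist_self_nonpos hU.1).trans ht0
    · exact (partCost_image_coverTable he3 hinj M).trans_le (le_of_eq (by rw [hMcard]; ring))
  · rintro ⟨P, hP, hEMD, hcost⟩
    have h3 : ∀ B ∈ P, 3 ≤ B.card := fun B hB =>
      card_le_of_forall_filter_nonempty χ <| forall_filter_nonempty_of_EMD_lt χ hU (hP.1 B hB)
        fun a => by rw [huniv] at hEMD ⊢; linarith [hEMD B hB]
    obtain ⟨M, hM, hcover⟩ := exists_biUnion_eq_univ_of_isRowPartition he3 hinj hP
      (mem_range_of_partCost_coverTable_le he3 hm hinj hP h3 hcost)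
    exact ⟨M, by omega, hcover⟩
end

section
/- Let T : Fin n → Fin m → Σ be a table and k ≥ 1. Let B = {i ∈ Fin n : |class(i)| < k}, suppose B ≠ ∅, suppose at least one duplicate class has size ≥ k, and suppose |B| + ∑_{C} (|C| − k) < k, where the sum ranges over the duplicate classes C of size at least k. Then every k-anonymous partition of the rows of T has cost at least |B| + c_min, where c_min is the minimum size of a duplicate class of size at least k. -/
/-!
Let `S` be the set of rows lying in blocks whose rows are not all identical; every such block `D`
costs at least `|D|`, so the partition costs at least `|S|`. A block of at least `k` rows containing
a row whose class has fewer than `k` rows cannot be constant, so the set `B` of these small rows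
lies in `S`. It remains to find a class of size `≥ k` inside `S`, since it is disjoint from `B`.
If every such class `C` had a row outside `S`, that row would sit in a constant block of at least
`k` rows of `C` disjoint from `S`, so `|C ∩ S| ≤ |C| - k`; then `|S| ≤ |B| + ∑ (|C| - k) < k`,
although the block of a small row lies in `S` and has at least `k` rows.
-/

open Finset

attribute [local instance] Classical.propDecidable

/-- The duplicate class of row `i`: all rows identical to row `i`. -/
noncomputable def cls {n m : ℕ} {σ : Type*} (T : Fin n → Fin m → σ) (i : Fin n) :
    Finset (Fin n) :=
  Finset.univ.filter (fun i' => ∀ j, T i' j = T i j)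

variable {n : ℕ}

def IsConstantBlock {ι α : Type*} (T : Fin n → ι → α) (D : Finset (Fin n)) : Prop :=
  ∀ a ∈ D, ∀ a' ∈ D, T a = T a'

noncomputable def nonconstantRows {ι α : Type*} (T : Fin n → ι → α)
    (P : Finset (Finset (Fin n))) : Finset (Fin n) :=
  (P.filter fun D => ¬ IsConstantBlock T D).biUnion id

section Impure

variable {ι α : Type*} {T : Fin n → ι → α} {P : Finset (Finset (Fin n))} {D : Finset (Fin n)}

lemma card_le_suppCost_of_not_isConstantBlock [Fintype ι] (h : ¬ IsConstantBlock T D) :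
    D.card ≤ suppCost T D := by
  obtain ⟨a, ha, a', ha', hne⟩ : ∃ a ∈ D, ∃ a' ∈ D, T a ≠ T a' := by
    simpa [IsConstantBlock] using h
  obtain ⟨j, hj⟩ := Function.ne_iff.mp hne
  have hcols : 0 < (univ.filter fun j => ¬ ∀ i ∈ D, ∀ i' ∈ D, T i j = T i' j).card :=
    card_pos.mpr ⟨j, mem_filter.mpr ⟨mem_univ j, fun h => hj (h a ha a' ha')⟩⟩
  exact Nat.le_mul_of_pos_right _ hcols

lemma card_nonconstantRows_le_partCost [Fintype ι] (T : Fin n → ι → α)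
    (P : Finset (Finset (Fin n))) : (nonconstantRows T P).card ≤ partCost T P :=
  calc (nonconstantRows T P).card ≤ ∑ D ∈ P.filter (¬ IsConstantBlock T ·), D.card :=
        card_biUnion_le
    _ ≤ ∑ D ∈ P.filter (¬ IsConstantBlock T ·), suppCost T D :=
      sum_le_sum fun _ hD => card_le_suppCost_of_not_isConstantBlock (mem_filter.mp hD).2
    _ ≤ partCost T P := sum_le_sum_of_subset (filter_subset _ _)

lemma subset_nonconstantRows (hD : D ∈ P) (h : ¬ IsConstantBlock T D) :
    D ⊆ nonconstantRows T P :=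
  fun _ hi => mem_biUnion.mpr ⟨D, mem_filter.mpr ⟨hD, h⟩, hi⟩

lemma notMem_nonconstantRows_of_isConstantBlock (hP : IsRowPartition P) (hD : D ∈ P)
    (hconst : IsConstantBlock T D) {i : Fin n} (hi : i ∈ D) : i ∉ nonconstantRows T P := by
  simp only [nonconstantRows, mem_biUnion, mem_filter, id]
  rintro ⟨D', ⟨hD', hnonconst⟩, hi'⟩
  have hne : D ≠ D' := by
    rintro rfl
    exact hnonconst hconst
  exact disjoint_left.mp (hP.2.1 D hD D' hD' hne) hi hi'

end Impure

section Classes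

variable {m : ℕ} {σ : Type*} {T : Fin n → Fin m → σ} {P : Finset (Finset (Fin n))} {k : ℕ}
  {D : Finset (Fin n)} {i i' : Fin n}

noncomputable def smallRows (T : Fin n → Fin m → σ) (k : ℕ) : Finset (Fin n) :=
  univ.filter fun i => (cls T i).card < k

noncomputable def bigClasses (T : Fin n → Fin m → σ) (k : ℕ) : Finset (Finset (Fin n)) :=
  (univ.image (cls T)).filter fun C => k ≤ C.card

lemma mem_cls : i' ∈ cls T i ↔ T i' = T i := by
  simp [cls, funext_iff]

lemma mem_cls_self (T : Fin n → Fin m → σ) (i : Fin n) : i ∈ cls T i :=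
  mem_cls.mpr rfl

lemma cls_eq_of_mem (h : i' ∈ cls T i) : cls T i' = cls T i := by
  ext x
  simp only [mem_cls, mem_cls.mp h]

lemma IsConstantBlock.subset_cls (h : IsConstantBlock T D) (hi : i ∈ D) : D ⊆ cls T i :=
  fun _ hx => mem_cls.mpr (h _ hx i hi)

lemma disjoint_smallRows_cls (h : k ≤ (cls T i).card) : Disjoint (smallRows T k) (cls T i) := by
  refine disjoint_right.mpr fun i' hi' hsmall => ?_
  have hlt := (mem_filter.mp hsmall).2
  rw [cls_eq_of_mem hi'] at hlt
  omega

lemma smallRows_subset_nonconstantRows (hP : IsRowPartition P) (hanon : ∀ B ∈ P, k ≤ B.card) :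
    smallRows T k ⊆ nonconstantRows T P := by
  intro i hi
  obtain ⟨D, hD, hiD⟩ := hP.2.2 i
  refine subset_nonconstantRows hD (fun hconst => ?_) hiD
  have hle := card_le_card (hconst.subset_cls hiD)
  have hlt := (mem_filter.mp hi).2
  have := hanon D hD
  omega

lemma card_cls_inter_nonconstantRows_le (hP : IsRowPartition P) (hanon : ∀ B ∈ P, k ≤ B.card)
    (hi' : i' ∈ cls T i) (hi'S : i' ∉ nonconstantRows T P) :
    (cls T i ∩ nonconstantRows T P).card ≤ (cls T i).card - k := by
  obtain ⟨D, hD, hi'D⟩ := hP.2.2 i'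
  have hconst : IsConstantBlock T D := by
    by_contra hnonconst
    exact hi'S (subset_nonconstantRows hD hnonconst hi'D)
  have hDcls : D ⊆ cls T i := cls_eq_of_mem hi' ▸ hconst.subset_cls hi'D
  have hdisj : Disjoint (cls T i ∩ nonconstantRows T P) D :=
    disjoint_left.mpr fun _ hx hxD =>
      notMem_nonconstantRows_of_isConstantBlock hP hD hconst hxD (mem_inter.mp hx).2
  have hunion : (cls T i ∩ nonconstantRows T P ∪ D).card ≤ (cls T i).card :=
    card_le_card (union_subset inter_subset_left hDcls)
  rw [card_union_of_disjoint hdisj] at hunion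
  have := hanon D hD
  omega

lemma card_nonconstantRows_sdiff_smallRows_le (hP : IsRowPartition P)
    (hanon : ∀ B ∈ P, k ≤ B.card)
    (hnone : ∀ i, k ≤ (cls T i).card → ¬ cls T i ⊆ nonconstantRows T P) :
    (nonconstantRows T P \ smallRows T k).card ≤ ∑ C ∈ bigClasses T k, (C.card - k) := by
  have hcover : nonconstantRows T P \ smallRows T k ⊆
      (bigClasses T k).biUnion (· ∩ nonconstantRows T P) := by
    intro i hi
    obtain ⟨hiS, hbig⟩ := mem_sdiff.mp hi
    have hk : k ≤ (cls T i).card := by simpa [smallRows] using hbig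
    exact mem_biUnion.mpr ⟨cls T i, mem_filter.mpr ⟨mem_image_of_mem _ (mem_univ i), hk⟩,
      mem_inter.mpr ⟨mem_cls_self T i, hiS⟩⟩
  calc _ ≤ _ := card_le_card hcover
    _ ≤ ∑ C ∈ bigClasses T k, (C ∩ nonconstantRows T P).card := card_biUnion_le
    _ ≤ _ := sum_le_sum fun C hC => by
      obtain ⟨hCim, hk⟩ := mem_filter.mp hC
      obtain ⟨i, -, rfl⟩ := mem_image.mp hCim
      obtain ⟨i', hi', hi'S⟩ := not_subset.mp (hnone i hk)
      exact card_cls_inter_nonconstantRows_le hP hanon hi' hi'S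

lemma exists_cls_subset_nonconstantRows (hP : IsRowPartition P) (hanon : ∀ B ∈ P, k ≤ B.card)
    (hsmall : (smallRows T k).Nonempty)
    (hsum : (smallRows T k).card + ∑ C ∈ bigClasses T k, (C.card - k) < k) :
    ∃ i, k ≤ (cls T i).card ∧ cls T i ⊆ nonconstantRows T P := by
  by_contra! hnone
  obtain ⟨i₀, hi₀⟩ := hsmall
  obtain ⟨D, hD, hi₀D⟩ := hP.2.2 i₀
  have hDS : D ⊆ nonconstantRows T P := by
    refine subset_nonconstantRows hD fun hconst => ?_
    exact notMem_nonconstantRows_of_isConstantBlock hP hD hconst hi₀D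
      (smallRows_subset_nonconstantRows hP hanon hi₀)
  have hDk := hanon D hD
  have hS := card_le_card hDS
  have hsplit := card_le_card_sdiff_add_card (s := nonconstantRows T P) (t := smallRows T k)
  have hrest := card_nonconstantRows_sdiff_smallRows_le hP hanon hnone
  omega

end Classes

theorem stmt16_general {σ : Type*} (n m k : ℕ) (T : Fin n → Fin m → σ)
    (hBne : (Finset.univ.filter (fun i : Fin n => (cls T i).card < k)).Nonempty)
    (hsmallsum :
      (Finset.univ.filter (fun i : Fin n => (cls T i).card < k)).card +
        ∑ C ∈ (Finset.univ.image (cls T)).filter (fun C => k ≤ C.card), (C.card - k)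
      < k)
    (P : Finset (Finset (Fin n))) (hP : IsRowPartition P)
    (hanon : ∀ B ∈ P, k ≤ B.card) :
    (Finset.univ.filter (fun i : Fin n => (cls T i).card < k)).card +
        sInf {c : ℕ | ∃ i : Fin n, k ≤ (cls T i).card ∧ (cls T i).card = c}
      ≤ partCost T P := by
  obtain ⟨i, hik, hiS⟩ := exists_cls_subset_nonconstantRows hP hanon hBne hsmallsum
  have hunion : smallRows T k ∪ cls T i ⊆ nonconstantRows T P :=
    union_subset (smallRows_subset_nonconstantRows hP hanon) hiS
  have hmin : sInf {c | ∃ i, k ≤ (cls T i).card ∧ (cls T i).card = c} ≤ (cls T i).card :=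
    Nat.sInf_le ⟨i, hik, rfl⟩
  calc _ ≤ (smallRows T k).card + (cls T i).card := Nat.add_le_add_left hmin _
    _ = (smallRows T k ∪ cls T i).card :=
        (card_union_of_disjoint (disjoint_smallRows_cls hik)).symm
    _ ≤ (nonconstantRows T P).card := card_le_card hunion
    _ ≤ partCost T P := card_nonconstantRows_le_partCost T P

theorem stmt16 {σ : Type*} (n m k : ℕ) (hk : 1 ≤ k) (T : Fin n → Fin m → σ)
    (hBne : (Finset.univ.filter (fun i : Fin n => (cls T i).card < k)).Nonempty)
    (hbig : ∃ i : Fin n, k ≤ (cls T i).card)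
    (hsmallsum :
      (Finset.univ.filter (fun i : Fin n => (cls T i).card < k)).card +
        ∑ C ∈ (Finset.univ.image (cls T)).filter (fun C => k ≤ C.card), (C.card - k)
      < k)
    (P : Finset (Finset (Fin n))) (hP : IsRowPartition P)
    (hanon : ∀ B ∈ P, k ≤ B.card) :
    (Finset.univ.filter (fun i : Fin n => (cls T i).card < k)).card +
        sInf {c : ℕ | ∃ i : Fin n, k ≤ (cls T i).card ∧ (cls T i).card = c}
      ≤ partCost T P :=
  stmt16_general n m k T hBne hsmallsum P hP hanon
end
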